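/- If a finite metric space (X,d) admits a (τ,ρ)-ultrametric cover, then it admits a (τ,ρ)-triangle-LSO. -/

import Mathlib

open scoped BigOperators

/-- `du` is an ultrametric distance function on `X`: a metric satisfying the
strong triangle inequality. -/
def UltrametricOn {X : Type*} (du : X → X → ℝ) : Prop :=
  (∀ x, du x x = 0) ∧ (∀ x y : X, x ≠ y → 0 < du x y) ∧
    (∀ x y : X, du x y = du y x) ∧
    ∀ x y z : X, du x z ≤ max (du x y) (du y z)

/-- `(τ, ρ)`-ultrametric cover of a metric space `X`. -/
def IsUltrametricCover (X : Type*) [MetricSpace X] (τ ρ : ℝ) : Prop :=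
  ∃ s : ℕ, (s : ℝ) ≤ τ ∧ ∃ D : Fin s → X → X → ℝ,
    (∀ i, UltrametricOn (D i)) ∧
    (∀ (i : Fin s) (x y : X), dist x y ≤ D i x y) ∧
    ∀ x y : X, ∃ i, D i x y ≤ ρ * dist x y

/-- The ordering `σ` serves the ordered pair `(x,y)` in the triangle-LSO sense
with stretch `ρ`: `x ⪯_σ y` and any two points `a ⪯_σ b` lying (inclusively)
between `x` and `y` satisfy `d(a,b) ≤ ρ·d(x,y)`. -/
def TriLSOPair {X : Type*} (d : X → X → ℝ) (σ : X → ℝ) (ρ : ℝ) (x y : X) : Prop :=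
  σ x ≤ σ y ∧ ∀ a b : X, σ x ≤ σ a → σ a ≤ σ b → σ b ≤ σ y → d a b ≤ ρ * d x y

/-- `(τ,ρ)`-triangle-LSO for `X` with distance function `d`: at most `τ` linear
orderings of `X` (each given by an injective real-valued function), such that
every pair is served by some ordering, possibly after swapping roles. -/
def IsTriangleLSO {X : Type*} (d : X → X → ℝ) (τ ρ : ℝ) : Prop :=
  ∃ s : ℕ, (s : ℝ) ≤ τ ∧ ∃ σ : Fin s → X → ℝ,
    (∀ i, Function.Injective (σ i)) ∧
    ∀ x y : X, ∃ i, TriLSOPair d (σ i) ρ x y ∨ TriLSOPair d (σ i) ρ y x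

/-!
An ultrametric `D` on a finite set admits a linear order in which every closed ball `B(x, r)` is
an interval: fix any labelling of the points and compare `x` and `y` through the minimal labels of
the open balls around them, at every radius from the largest downwards (a colexicographic order).
Two points first differ at radius `D x y`, where their open balls are disjoint, and balls of
larger radius coincide. Taking such an order for each ultrametric of the cover, a pair `x ⪯ y`
with `D x y ≤ ρ d(x, y)` is served: points `a ⪯ b` between them lie in `B(x, D x y)`, so
`d(a, b) ≤ D a b ≤ D x y ≤ ρ d(x, y)`.
-/

open Finset Function

namespace UltrametricOn

variable {X : Type*} {D : X → X → ℝ}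

theorem apply_self (hD : UltrametricOn D) (x : X) : D x x = 0 := hD.1 x

theorem pos (hD : UltrametricOn D) {x y : X} (h : x ≠ y) : 0 < D x y := hD.2.1 x y h

theorem symm (hD : UltrametricOn D) (x y : X) : D x y = D y x := hD.2.2.1 x y

theorem le_max (hD : UltrametricOn D) (x y z : X) : D x z ≤ max (D x y) (D y z) :=
  hD.2.2.2 x y z

theorem nonneg (hD : UltrametricOn D) (x y : X) : 0 ≤ D x y := by
  rcases eq_or_ne x y with rfl | h
  · exact (hD.apply_self x).ge
  · exact (hD.pos h).le

theorem eq_of_lt (hD : UltrametricOn D) {x y z : X} (h : D x y < D x z) : D y z = D x z := by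
  apply le_antisymm
  · calc D y z ≤ max (D y x) (D x z) := hD.le_max y x z
      _ = D x z := by rw [hD.symm y x, max_eq_right h.le]
  · rcases le_max_iff.mp (hD.le_max x y z) with hxz | hxz
    · exact absurd hxz h.not_ge
    · exact hxz

end UltrametricOn

section BallOrder

variable {X : Type*} [Fintype X] [LinearOrder X] {D : X → X → ℝ}

variable (D) in
noncomputable def ballMin (x : X) (r : ℝ) : WithTop X :=
  (univ.filter fun z => D x z < r).min

variable (D) in
noncomputable def ballKey (x : X) : Colex (Set.range (uncurry D) → WithTop X) :=
  toColex fun r => ballMin D x r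

theorem ballMin_eq_of_lt (hD : UltrametricOn D) {x y : X} {r : ℝ} (h : D x y < r) :
    ballMin D x r = ballMin D y r := by
  have hball : (univ.filter fun z => D x z < r) = univ.filter fun z => D y z < r := by
    ext z
    simp only [mem_filter, mem_univ, true_and]
    constructor
    · exact fun hz => (hD.le_max y x z).trans_lt (max_lt (by rwa [hD.symm]) hz)
    · exact fun hz => (hD.le_max x y z).trans_lt (max_lt h hz)
  rw [ballMin, ballMin, hball]

theorem ballMin_ne (hD : UltrametricOn D) {x y : X} (hxy : x ≠ y) :
    ballMin D x (D x y) ≠ ballMin D y (D x y) := by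
  have hr := hD.pos hxy
  obtain ⟨a, ha⟩ := min_of_mem (s := univ.filter fun z => D x z < D x y) (a := x)
    (by simp [hD.apply_self, hr])
  obtain ⟨b, hb⟩ := min_of_mem (s := univ.filter fun z => D y z < D x y) (a := y)
    (by simp [hD.apply_self, hr])
  have hxa : D x a < D x y := (mem_filter.mp (mem_of_min ha)).2
  have hyb : D y b < D x y := (mem_filter.mp (mem_of_min hb)).2
  rw [ballMin, ballMin, ha, hb]
  rintro hab
  cases WithTop.coe_injective hab
  exact (hD.le_max x a y).not_gt (max_lt hxa (hD.symm a y ▸ hyb))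

theorem ballMin_le_of_ballKey_le (hD : UltrametricOn D) {x y : X}
    (h : ballKey D x ≤ ballKey D y) : ballMin D x (D x y) ≤ ballMin D y (D x y) :=
  Pi.apply_le_of_toColex (i := ⟨D x y, (x, y), rfl⟩) h fun _ hj => ballMin_eq_of_lt hD hj

theorem ballKey_injective (hD : UltrametricOn D) : Injective (ballKey D) := by
  intro x y h
  by_contra hxy
  have h₁ := ballMin_le_of_ballKey_le hD h.le
  have h₂ := ballMin_le_of_ballKey_le hD h.ge
  rw [hD.symm y x] at h₂
  exact ballMin_ne hD hxy (h₁.antisymm h₂)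

theorem le_of_ballKey_le_le (hD : UltrametricOn D) {x a y : X} (hxa : ballKey D x ≤ ballKey D a)
    (hay : ballKey D a ≤ ballKey D y) : D x a ≤ D x y := by
  by_contra! hlt
  have hxa' : x ≠ a := by
    rintro rfl
    exact (hD.apply_self x ▸ hlt).not_ge (hD.nonneg x y)
  have h₁ := ballMin_le_of_ballKey_le hD hxa
  have h₂ := ballMin_le_of_ballKey_le hD hay
  rw [hD.symm a y, hD.eq_of_lt hlt, ← ballMin_eq_of_lt hD hlt] at h₂
  exact ballMin_ne hD hxa' (h₁.antisymm h₂)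

end BallOrder

theorem exists_real_le_iff {X β : Type*} [Finite X] [LinearOrder β] (f : X → β) :
    ∃ σ : X → ℝ, ∀ x y, σ x ≤ σ y ↔ f x ≤ f y := by
  cases nonempty_fintype X
  refine ⟨fun x => (#{z | f z < f x} : ℕ), fun x y => ?_⟩
  rw [Nat.cast_le]
  constructor
  · contrapose!
    intro h
    refine card_lt_card ((ssubset_iff_of_subset ?_).mpr ⟨y, ?_⟩)
    · exact monotone_filter_right _ fun z _ hz => hz.trans h
    · simpa using h
  · intro h
    exact card_le_card (monotone_filter_right _ fun z _ hz => hz.trans_le h)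

theorem UltrametricOn.exists_order_with_convex_balls {X : Type*} [Finite X] {D : X → X → ℝ}
    (hD : UltrametricOn D) :
    ∃ σ : X → ℝ, Injective σ ∧ ∀ x a y, σ x ≤ σ a → σ a ≤ σ y → D x a ≤ D x y := by
  cases nonempty_fintype X
  let : LinearOrder X := LinearOrder.lift' _ (Fintype.equivFin X).injective
  obtain ⟨σ, hσ⟩ := exists_real_le_iff (ballKey D)
  refine ⟨σ, fun x y h => ballKey_injective hD ((hσ x y).1 h.le |>.antisymm ((hσ y x).1 h.ge)),
    fun x a y hxa hay => le_of_ballKey_le_le hD ((hσ x a).1 hxa) ((hσ a y).1 hay)⟩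

theorem triLSOPair_of_ultrametric {X : Type*} {d D : X → X → ℝ} {σ : X → ℝ} {ρ : ℝ}
    (hD : UltrametricOn D) (hdom : ∀ a b, d a b ≤ D a b)
    (hσ : ∀ x a y, σ x ≤ σ a → σ a ≤ σ y → D x a ≤ D x y) {x y : X} (hxy : σ x ≤ σ y)
    (hρ : D x y ≤ ρ * d x y) : TriLSOPair d σ ρ x y :=
  ⟨hxy, fun a b hxa hab hby => calc
    d a b ≤ D a b := hdom a b
    _ ≤ max (D a x) (D x b) := hD.le_max a x b
    _ ≤ D x y := max_le ((hD.symm a x).trans_le (hσ x a y hxa (hab.trans hby)))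
      (hσ x b y (hxa.trans hab) hby)
    _ ≤ ρ * d x y := hρ⟩

/-- If a finite metric space admits a `(τ,ρ)`-ultrametric cover, then it admits
a `(τ,ρ)`-triangle-LSO. -/
theorem ultrametric_cover_to_triangle_LSO
    (X : Type) [MetricSpace X] [Fintype X] (τ ρ : ℝ)
    (hcover : IsUltrametricCover X τ ρ) :
    IsTriangleLSO (fun x y : X => dist x y) τ ρ := by
  obtain ⟨s, hs, D, hD, hdom, hcov⟩ := hcover
  choose σ hσinj hσ using fun i => (hD i).exists_order_with_convex_balls
  refine ⟨s, hs, σ, hσinj, fun x y => ?_⟩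
  obtain ⟨i, hi⟩ := hcov x y
  refine ⟨i, ?_⟩
  rcases le_total (σ i x) (σ i y) with h | h
  · exact Or.inl (triLSOPair_of_ultrametric (hD i) (hdom i) (hσ i) h hi)
  · refine Or.inr (triLSOPair_of_ultrametric (hD i) (hdom i) (hσ i) h ?_)
    rwa [(hD i).symm, dist_comm]
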